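/- Let J ≥ 1 and let R and C be 2J×2J antisymmetric matrices (over a commutative ring, e.g. ℂ). Then Pf(R + C) = Σ_{M=0}^{J} Σ_{u ∈ I_{2M}^{2J}} sgn(u) · Pf R_{u'} · Pf C_u, where the inner sum is over all strictly increasing functions u : {1,…,2M} → {1,…,2J}. -/

import Mathlib

/-!
Write `Pf U = (2^J J!)⁻¹ ∑_{τ ∈ S_{2J}} sgn τ ∏_j U(τ(2j), τ(2j+1))` and let the `j`-th pair carry
its own matrix.  Since this sum is multilinear in the matrices, expanding `∏_j (R + C)` gives a sum
over the sets `T` of pairs that take their entry from `C`; relabelling the pairs (an even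
permutation, as it moves pairs as blocks) moves `T` to the first `M = |T|` pairs.  Every
`τ ∈ S_{2J}` factors uniquely as `ι_u ∘ (ρ ⊕ π)` with `u` enumerating `τ({0,…,2M-1})`,
`ρ ∈ S_{2M}` and `π ∈ S_{2J-2M}`, and this splits the sum into `sgn(u)` times the Pfaffian sums of
`C_u` and `R_{u'}`.  The normalisations match: `binom(J,M) 2^M M! 2^(J-M) (J-M)! = 2^J J!`.
-/

open Finset

noncomputable section

/-- The permutation `ι_t` of `{0,…,N-1}` induced by an increasing function
`t : Fin K → Fin N` (encoded by its image, the `K`-element set `s`): it equals `t` on the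
first `K` indices, and the increasing enumeration `t'` of the complement on the rest. -/
def shuffle {N K : ℕ} (s : Finset (Fin N)) (hs : s.card = K) : Equiv.Perm (Fin N) :=
  Equiv.ofBijective
    (fun n => if h : (n:ℕ) < K then s.orderEmbOfFin hs ⟨(n:ℕ), h⟩
      else sᶜ.orderEmbOfFin (by rw [Finset.card_compl, Fintype.card_fin, hs])
        ⟨(n:ℕ) - K, by have := n.isLt; omega⟩)
    (by
      refine Finite.injective_iff_bijective.mp ?_
      intro a b hab
      by_cases ha : (a:ℕ) < K <;> by_cases hb : (b:ℕ) < K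
      · simp only [dif_pos ha, dif_pos hb] at hab
        have := (s.orderEmbOfFin hs).injective hab
        have hv : (a:ℕ) = (b:ℕ) := by simpa using this
        exact Fin.ext hv
      · simp only [dif_pos ha, dif_neg hb] at hab
        have h1 : s.orderEmbOfFin hs ⟨(a:ℕ), ha⟩ ∈ s := Finset.orderEmbOfFin_mem s hs _
        have h2 := Finset.orderEmbOfFin_mem sᶜ
          (by rw [Finset.card_compl, Fintype.card_fin, hs])
          ⟨(b:ℕ) - K, by have := b.isLt; omega⟩
        rw [hab] at h1
        exact absurd h1 (Finset.mem_compl.mp h2)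
      · simp only [dif_neg ha, dif_pos hb] at hab
        have h1 : s.orderEmbOfFin hs ⟨(b:ℕ), hb⟩ ∈ s := Finset.orderEmbOfFin_mem s hs _
        have h2 := Finset.orderEmbOfFin_mem sᶜ
          (by rw [Finset.card_compl, Fintype.card_fin, hs])
          ⟨(a:ℕ) - K, by have := a.isLt; omega⟩
        rw [← hab] at h1
        exact absurd h1 (Finset.mem_compl.mp h2)
      · simp only [dif_neg ha, dif_neg hb] at hab
        have := (sᶜ.orderEmbOfFin
          (by rw [Finset.card_compl, Fintype.card_fin, hs])).injective hab
        have hv : (a:ℕ) - K = (b:ℕ) - K := by simpa using this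
        exact Fin.ext (by omega))

end

open Finset Matrix

noncomputable section

/-- Pfaffian of a `2J × 2J` matrix, via the sum over the symmetric group:
`Pf U = (1/(2^J J!)) Σ_{τ∈S_{2J}} sgn(τ) ∏_{j=1}^J U[τ(2j−1),τ(2j)]`
(for a `0 × 0` matrix this gives `Pf = 1`). -/
def pf {R : Type*} [Field R] {J : ℕ} (U : Matrix (Fin (2*J)) (Fin (2*J)) R) : R :=
  ((2:R)^J * (Nat.factorial J : R))⁻¹ *
    ∑ τ : Equiv.Perm (Fin (2*J)), ((Equiv.Perm.sign τ : ℤ) : R) *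
      ∏ j : Fin J, U (τ ⟨2*(j:ℕ), by have := j.isLt; omega⟩)
                     (τ ⟨2*(j:ℕ)+1, by have := j.isLt; omega⟩)

/-- The summand `sgn(u) · Pf R_{u'} · Pf C_u` attached to an element `u ∈ I_{2M}^{2J}`
(encoded by its image, the `2M`-element subset `s` of `{0,…,2J−1}`, with
`u = s.orderEmbOfFin`, `u' = sᶜ.orderEmbOfFin`, and `sgn(u)` the sign of the induced
"shuffle" permutation `ι_u`). -/
def pfSummand {J : ℕ} (R C : Matrix (Fin (2*J)) (Fin (2*J)) ℂ) (M : ℕ)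
    (s : Finset (Fin (2*J))) (hs : s.card = 2*M) : ℂ :=
  ((Equiv.Perm.sign (shuffle s hs) : ℤ) : ℂ) *
    pf (fun j k : Fin (2*(J-M)) =>
      R (sᶜ.orderEmbOfFin (by rw [Finset.card_compl, Fintype.card_fin, hs]; omega) j)
        (sᶜ.orderEmbOfFin (by rw [Finset.card_compl, Fintype.card_fin, hs]; omega) k)) *
    pf (fun j k : Fin (2*M) => C (s.orderEmbOfFin hs j) (s.orderEmbOfFin hs k))

open Equiv Equiv.Perm

section Shuffle

variable {N K : ℕ} (s : Finset (Fin N)) (hs : s.card = K)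

lemma shuffle_apply_of_lt (n : Fin N) (h : (n : ℕ) < K) :
    shuffle s hs n = s.orderEmbOfFin hs ⟨n, h⟩ :=
  dif_pos h

lemma shuffle_apply_of_not_lt (n : Fin N) (h : ¬ (n : ℕ) < K) :
    shuffle s hs n = sᶜ.orderEmbOfFin (by rw [card_compl, Fintype.card_fin, hs])
      ⟨n - K, by omega⟩ :=
  dif_neg h

lemma shuffle_mem_iff (n : Fin N) : shuffle s hs n ∈ s ↔ (n : ℕ) < K := by
  by_cases h : (n : ℕ) < K
  · simp [h, shuffle_apply_of_lt s hs n h]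
  · simpa [h, shuffle_apply_of_not_lt s hs n h] using mem_compl.mp (orderEmbOfFin_mem sᶜ _ _)

end Shuffle

lemma card_compl_eq_two_mul_sub {J M : ℕ} {s : Finset (Fin (2*J))} (hs : s.card = 2*M) :
    sᶜ.card = 2*(J-M) := by
  rw [card_compl, Fintype.card_fin, hs]; omega

lemma Fin.prod_univ_split {β : Type*} [CommMonoid β] {J M : ℕ} (hM : M ≤ J) (f : Fin J → β) :
    ∏ j, f j = (∏ i : Fin M, f ⟨i, by omega⟩) * ∏ i : Fin (J - M), f ⟨M + i, by omega⟩ := by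
  rw [← Fin.prod_congr' f (Nat.add_sub_cancel' hM), Fin.prod_univ_add]
  rfl

lemma two_pow_mul_factorial_ne_zero {K : Type*} [Field K] [CharZero K] (n : ℕ) :
    (2:K)^n * n.factorial ≠ 0 :=
  mul_ne_zero (pow_ne_zero _ two_ne_zero) (Nat.cast_ne_zero.mpr n.factorial_ne_zero)

lemma choose_mul_two_pow_mul_factorial {K : Type*} [CommSemiring K] {J M : ℕ} (hM : M ≤ J) :
    (J.choose M : K) * ((2:K)^M * M.factorial) * ((2:K)^(J-M) * (J-M).factorial) =
      (2:K)^J * J.factorial := by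
  rw [← Nat.add_sub_cancel' hM, pow_add, Nat.add_sub_cancel_left,
    ← Nat.choose_mul_factorial_mul_factorial (Nat.le_add_right M (J-M)), Nat.add_sub_cancel_left]
  push_cast
  ring

section Pairing

variable {α : Type*} [CommRing α] {J : ℕ}

def pairProd (A : Fin J → Matrix (Fin (2*J)) (Fin (2*J)) α) (τ : Perm (Fin (2*J))) : α :=
  ∏ j : Fin J, A j (τ ⟨2*j, by omega⟩) (τ ⟨2*j+1, by omega⟩)

def pairSum (A : Fin J → Matrix (Fin (2*J)) (Fin (2*J)) α) : α :=
  ∑ τ : Perm (Fin (2*J)), ((sign τ : ℤ) : α) * pairProd A τ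

lemma pf_eq_inv_mul_pairSum {K : Type*} [Field K] (U : Matrix (Fin (2*J)) (Fin (2*J)) K) :
    pf U = ((2:K)^J * J.factorial)⁻¹ * pairSum (fun _ => U) :=
  rfl

lemma pairSum_const {K : Type*} [Field K] [CharZero K] (U : Matrix (Fin (2*J)) (Fin (2*J)) K) :
    pairSum (fun _ => U) = (2:K)^J * J.factorial * pf U := by
  rw [pf_eq_inv_mul_pairSum, mul_inv_cancel_left₀ (two_pow_mul_factorial_ne_zero J)]

lemma pairSum_add (A B : Fin J → Matrix (Fin (2*J)) (Fin (2*J)) α) :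
    pairSum (fun j => A j + B j) =
      ∑ T ∈ univ.powerset, pairSum (fun j => if j ∈ T then A j else B j) := by
  classical
  simp only [pairSum, pairProd, Matrix.add_apply, prod_add, mul_sum]
  rw [sum_comm]
  refine sum_congr rfl fun T _ => sum_congr rfl fun τ _ => ?_
  simp only [Matrix.ite_apply]
  rw [prod_ite, filter_mem_eq_inter, univ_inter, filter_not, filter_mem_eq_inter, univ_inter]

def pairEquiv (J : ℕ) : Fin J × Fin 2 ≃ Fin (2*J) :=
  finProdFinEquiv.trans (finCongr (mul_comm J 2))

def pairPerm (g : Perm (Fin J)) : Perm (Fin (2*J)) :=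
  (pairEquiv J).permCongr (g.prodCongr (Equiv.refl (Fin 2)))

lemma sign_pairPerm (g : Perm (Fin J)) : sign (pairPerm g) = 1 := by
  rw [pairPerm, sign_permCongr, prodCongr_refl_right, sign_prodCongrLeft]
  simp [Int.units_sq]

lemma pairPerm_apply (g : Perm (Fin J)) (j : Fin J) (r : ℕ) (hr : r < 2) :
    pairPerm g ⟨2*j + r, by omega⟩ = ⟨2*(g j) + r, by omega⟩ := by
  have hsymm : (pairEquiv J).symm ⟨2*j + r, by omega⟩ = (j, ⟨r, hr⟩) := by
    rw [Equiv.symm_apply_eq]; ext; simp [pairEquiv]; ring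
  rw [pairPerm, permCongr_apply, hsymm]
  ext
  simp [pairEquiv]; ring

lemma pairPerm_apply_two_mul (g : Perm (Fin J)) (j : Fin J) :
    pairPerm g ⟨2*j, by omega⟩ = ⟨2*(g j), by omega⟩ := by
  simpa using pairPerm_apply g j 0 (by omega)

lemma pairPerm_apply_two_mul_add_one (g : Perm (Fin J)) (j : Fin J) :
    pairPerm g ⟨2*j + 1, by omega⟩ = ⟨2*(g j) + 1, by omega⟩ :=
  pairPerm_apply g j 1 (by omega)

lemma pairSum_comp_perm (A : Fin J → Matrix (Fin (2*J)) (Fin (2*J)) α) (g : Perm (Fin J)) :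
    pairSum (A ∘ g) = pairSum A := by
  refine Fintype.sum_equiv (Equiv.mulRight (pairPerm g⁻¹)) _ _ fun τ => ?_
  simp only [pairProd, coe_mulRight, Perm.sign_mul, sign_pairPerm, mul_one, Perm.mul_apply]
  congr 1
  refine Fintype.prod_equiv g _ _ fun j => ?_
  rw [pairPerm_apply_two_mul, pairPerm_apply_two_mul_add_one]
  simp

lemma pairSum_ite_mem_eq_ite_lt (A B : Matrix (Fin (2*J)) (Fin (2*J)) α) {M : ℕ}
    (T : Finset (Fin J)) (hT : T.card = M) :
    pairSum (fun j => if j ∈ T then A else B) =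
      pairSum (fun j : Fin J => if (j:ℕ) < M then A else B) := by
  rw [← pairSum_comp_perm _ (shuffle T hT)]
  congr 1
  ext j : 1
  simp [shuffle_mem_iff]

lemma pairSum_add_eq_sum_choose (R C : Matrix (Fin (2*J)) (Fin (2*J)) α) :
    pairSum (fun _ : Fin J => R + C) = ∑ M ∈ range (J+1),
      (J.choose M : α) * pairSum (fun j : Fin J => if (j:ℕ) < M then C else R) := by
  simp only [add_comm R C]
  rw [pairSum_add (fun _ => C) (fun _ => R), sum_powerset]
  simp only [card_univ, Fintype.card_fin]
  refine sum_congr rfl fun M _ => ?_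
  rw [sum_congr rfl fun T hT => pairSum_ite_mem_eq_ite_lt C R T (mem_powersetCard.mp hT).2,
    sum_const, card_powersetCard, card_univ, Fintype.card_fin, nsmul_eq_mul]

end Pairing

section Block

variable {J M : ℕ}

def blockEquiv (hM : M ≤ J) : Fin (2*M) ⊕ Fin (2*(J-M)) ≃ Fin (2*J) :=
  finSumFinEquiv.trans (finCongr (by omega))

def blockPerm (hM : M ≤ J) (ρ : Perm (Fin (2*M))) (π : Perm (Fin (2*(J-M)))) :
    Perm (Fin (2*J)) :=
  (blockEquiv hM).permCongr (ρ.sumCongr π)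

variable (hM : M ≤ J) (ρ : Perm (Fin (2*M))) (π : Perm (Fin (2*(J-M))))

lemma sign_blockPerm : sign (blockPerm hM ρ π) = sign ρ * sign π := by
  rw [blockPerm, sign_permCongr, sign_sumCongr]

lemma blockPerm_apply_of_lt (v : ℕ) (hv : v < 2*M) :
    blockPerm hM ρ π ⟨v, by omega⟩ = Fin.castLE (by omega) (ρ ⟨v, hv⟩) := by
  have hsymm : (blockEquiv hM).symm ⟨v, by omega⟩ = Sum.inl ⟨v, hv⟩ := by
    rw [Equiv.symm_apply_eq]; ext; simp [blockEquiv]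
  rw [blockPerm, permCongr_apply, hsymm]
  ext
  simp [blockEquiv]

lemma blockPerm_apply_of_le (v : ℕ) (hv : 2*M ≤ v) (hvJ : v < 2*J) :
    blockPerm hM ρ π ⟨v, hvJ⟩ =
      ⟨2*M + π ⟨v - 2*M, by omega⟩, by have := (π ⟨v - 2*M, by omega⟩).isLt; omega⟩ := by
  have hsymm : (blockEquiv hM).symm ⟨v, hvJ⟩ = Sum.inr ⟨v - 2*M, by omega⟩ := by
    rw [Equiv.symm_apply_eq]; ext; simp [blockEquiv]; omega
  rw [blockPerm, permCongr_apply, hsymm]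
  ext
  simp [blockEquiv]

variable {s : Finset (Fin (2*J))} (hs : s.card = 2*M)

lemma shuffle_blockPerm_apply_of_lt (v : ℕ) (hv : v < 2*M) :
    shuffle s hs (blockPerm hM ρ π ⟨v, by omega⟩) = s.orderEmbOfFin hs (ρ ⟨v, hv⟩) := by
  rw [blockPerm_apply_of_lt _ _ _ _ hv, shuffle_apply_of_lt _ _ _ (by simp)]
  rfl

lemma shuffle_blockPerm_apply_of_le (v : ℕ) (hv : 2*M ≤ v) (hvJ : v < 2*J) :
    shuffle s hs (blockPerm hM ρ π ⟨v, hvJ⟩) =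
      sᶜ.orderEmbOfFin (card_compl_eq_two_mul_sub hs) (π ⟨v - 2*M, by omega⟩) := by
  rw [blockPerm_apply_of_le _ _ _ _ hv, shuffle_apply_of_not_lt _ _ _ (by simp)]
  simp

lemma shuffle_blockPerm_mem_iff (n : Fin (2*J)) :
    shuffle s hs (blockPerm hM ρ π n) ∈ s ↔ (n : ℕ) < 2*M := by
  obtain ⟨v, hvJ⟩ := n
  rw [shuffle_mem_iff]
  by_cases hv : v < 2*M
  · simp [blockPerm_apply_of_lt hM ρ π v hv, hv]
  · simp [blockPerm_apply_of_le hM ρ π v (by omega) hvJ, hv]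

lemma pairProd_shuffle_mul_blockPerm {α : Type*} [CommRing α]
    (C R : Matrix (Fin (2*J)) (Fin (2*J)) α) :
    pairProd (fun j : Fin J => if (j:ℕ) < M then C else R) (shuffle s hs * blockPerm hM ρ π) =
      pairProd (fun _ => C.submatrix (s.orderEmbOfFin hs) (s.orderEmbOfFin hs)) ρ *
      pairProd (fun _ => R.submatrix (sᶜ.orderEmbOfFin (card_compl_eq_two_mul_sub hs))
        (sᶜ.orderEmbOfFin (card_compl_eq_two_mul_sub hs))) π := by
  rw [pairProd, Fin.prod_univ_split hM]
  congr 1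
  · refine prod_congr rfl fun i _ => ?_
    simp only [i.isLt, if_true, Perm.mul_apply]
    rw [shuffle_blockPerm_apply_of_lt hM ρ π hs (2*i) (by omega),
      shuffle_blockPerm_apply_of_lt hM ρ π hs (2*i+1) (by omega)]
    rfl
  · refine prod_congr rfl fun i _ => ?_
    simp only [show ¬ M + (i:ℕ) < M by omega, if_false, Perm.mul_apply]
    rw [shuffle_blockPerm_apply_of_le hM ρ π hs _ (by omega),
      shuffle_blockPerm_apply_of_le hM ρ π hs _ (by omega)]
    simp only [show 2*(M+(i:ℕ)) - 2*M = 2*i by omega,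
      show 2*(M+(i:ℕ)) + 1 - 2*M = 2*i+1 by omega]
    rfl

end Block

section Decomposition

variable {J M : ℕ}

def shuffleBlock (hM : M ≤ J) :
    {s : Finset (Fin (2*J)) // s ∈ powersetCard (2*M) univ} × Perm (Fin (2*M)) ×
      Perm (Fin (2*(J-M))) → Perm (Fin (2*J)) :=
  fun x => shuffle x.1.1 (mem_powersetCard.mp x.1.2).2 * blockPerm hM x.2.1 x.2.2

lemma shuffleBlock_mem_iff (hM : M ≤ J) (x) (n : Fin (2*J)) :
    shuffleBlock hM x n ∈ x.1.1 ↔ (n : ℕ) < 2*M :=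
  shuffle_blockPerm_mem_iff hM _ _ _ n

lemma shuffleBlock_injective (hM : M ≤ J) : Function.Injective (shuffleBlock hM) := by
  rintro ⟨⟨s, hs⟩, ρ, π⟩ ⟨⟨s', hs'⟩, ρ', π'⟩ h
  have hss : s = s' := by
    ext z
    obtain ⟨n, rfl⟩ := (shuffleBlock hM ⟨⟨s, hs⟩, ρ, π⟩).surjective z
    have hmem : shuffleBlock hM ⟨⟨s, hs⟩, ρ, π⟩ n ∈ s ↔ (n : ℕ) < 2*M :=
      shuffleBlock_mem_iff hM _ n
    have hmem' : shuffleBlock hM ⟨⟨s', hs'⟩, ρ', π'⟩ n ∈ s' ↔ (n : ℕ) < 2*M :=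
      shuffleBlock_mem_iff hM _ n
    rw [hmem, ← hmem', h]
  subst hss
  have hblock : blockPerm hM ρ π = blockPerm hM ρ' π' := mul_left_cancel h
  have hsum : sumCongrHom _ _ (ρ, π) = sumCongrHom _ _ (ρ', π') :=
    (blockEquiv hM).permCongr.injective hblock
  obtain ⟨rfl, rfl⟩ := Prod.mk.inj (sumCongrHom_injective hsum)
  rfl

lemma shuffleBlock_bijective (hM : M ≤ J) : Function.Bijective (shuffleBlock hM) := by
  rw [Fintype.bijective_iff_injective_and_card]
  refine ⟨shuffleBlock_injective hM, ?_⟩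
  simp only [Fintype.card_prod, Fintype.card_coe, Fintype.card_perm, card_powersetCard,
    card_univ, Fintype.card_fin]
  rw [← mul_assoc, show 2*(J-M) = 2*J - 2*M by omega]
  exact Nat.choose_mul_factorial_mul_factorial (by omega)

lemma pairSum_ite_lt_eq_sum_shuffle {α : Type*} [CommRing α] (hM : M ≤ J)
    (C R : Matrix (Fin (2*J)) (Fin (2*J)) α) :
    pairSum (fun j : Fin J => if (j:ℕ) < M then C else R) =
      ∑ s ∈ (powersetCard (2*M) (univ : Finset (Fin (2*J)))).attach,
        let hs := (mem_powersetCard.mp s.2).2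
        ((sign (shuffle s.1 hs) : ℤ) : α) *
          pairSum (fun _ => C.submatrix (s.1.orderEmbOfFin hs) (s.1.orderEmbOfFin hs)) *
          pairSum (fun _ => R.submatrix (s.1ᶜ.orderEmbOfFin (card_compl_eq_two_mul_sub hs))
            (s.1ᶜ.orderEmbOfFin (card_compl_eq_two_mul_sub hs))) := by
  rw [pairSum, ← (shuffleBlock_bijective hM).sum_comp, Fintype.sum_prod_type, univ_eq_attach]
  refine sum_congr rfl fun s _ => ?_
  dsimp only
  rw [pairSum, pairSum, mul_assoc, sum_mul_sum, Fintype.sum_prod_type]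
  simp only [mul_sum]
  refine sum_congr rfl fun ρ _ => sum_congr rfl fun π _ => ?_
  rw [shuffleBlock, pairProd_shuffle_mul_blockPerm, Perm.sign_mul, sign_blockPerm]
  push_cast
  ring

end Decomposition

lemma pfSummand_eq {J M : ℕ} (R C : Matrix (Fin (2*J)) (Fin (2*J)) ℂ) {s : Finset (Fin (2*J))}
    (hs : s.card = 2*M) :
    pfSummand R C M s hs = ((sign (shuffle s hs) : ℤ) : ℂ) *
      pf (R.submatrix (sᶜ.orderEmbOfFin (card_compl_eq_two_mul_sub hs))
        (sᶜ.orderEmbOfFin (card_compl_eq_two_mul_sub hs))) *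
      pf (C.submatrix (s.orderEmbOfFin hs) (s.orderEmbOfFin hs)) :=
  rfl

theorem pf_add_expansion_general (J : ℕ)
    (R C : Matrix (Fin (2*J)) (Fin (2*J)) ℂ) :
    pf (R + C) = ∑ M ∈ Finset.range (J+1),
      ∑ s ∈ (Finset.powersetCard (2*M) (Finset.univ : Finset (Fin (2*J)))).attach,
        pfSummand R C M s.1 ((Finset.mem_powersetCard.mp s.2).2) := by
  rw [pf_eq_inv_mul_pairSum, pairSum_add_eq_sum_choose, mul_sum]
  refine sum_congr rfl fun M hM => ?_
  have hMJ : M ≤ J := Nat.lt_succ_iff.mp (mem_range.mp hM)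
  rw [pairSum_ite_lt_eq_sum_shuffle hMJ, mul_sum, mul_sum]
  refine sum_congr rfl fun s _ => ?_
  dsimp only
  rw [pairSum_const, pairSum_const, pfSummand_eq]
  have hchoose : (J.choose M : ℂ) ≠ 0 := Nat.cast_ne_zero.mpr (Nat.choose_pos hMJ).ne'
  rw [← choose_mul_two_pow_mul_factorial hMJ]
  field_simp [Nat.factorial_ne_zero]

/-- **Lemma 8.7 (Sinclair).**  For `2J × 2J` antisymmetric matrices `R` and `C`,
`Pf(R+C) = Σ_{M=0}^J Σ_{u ∈ I_{2M}^{2J}} sgn(u) Pf R_{u'} Pf C_u`. -/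
theorem pf_add_expansion (J : ℕ) (hJ : 1 ≤ J)
    (R C : Matrix (Fin (2*J)) (Fin (2*J)) ℂ) (hR : Rᵀ = -R) (hC : Cᵀ = -C) :
    pf (R + C) = ∑ M ∈ Finset.range (J+1),
      ∑ s ∈ (Finset.powersetCard (2*M) (Finset.univ : Finset (Fin (2*J)))).attach,
        pfSummand R C M s.1 ((Finset.mem_powersetCard.mp s.2).2) :=
  pf_add_expansion_general J R C

end
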